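/- (Converse rate single-letterization for R_A.) Let (A_i, C_i), i = 1,…,N, be i.i.d. finite-valued pairs with pmf p_{AC}, and let K = f_C(C^N) for some function f_C of the whole block C^N. Then H(A^N | K) ≥ Σ_{i=1}^N H(A_i | K, C^{i−1}), where C^{i−1} = (C_1,…,C_{i−1}). In particular, for each i, H(A_i | K, A^{i−1}, C^{i−1}) = H(A_i | K, C^{i−1}), i.e., A_i − (K, C^{i−1}) − A^{i−1} is a Markov chain. -/
import Mathlib


open scoped BigOperators

noncomputable section

namespace SSW

/-- Probability that the random variable `X` takes the value `x`, under the pmf `p`. -/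
def pr {Ω α : Type*} [Fintype Ω] (p : Ω → ℝ) (X : Ω → α) (x : α) : ℝ :=
  ∑ ω, @ite _ (X ω = x) (Classical.propDecidable _) (p ω) 0

/-- Probability of the event `s` under the pmf `p`. -/
def prE {Ω : Type*} [Fintype Ω] (p : Ω → ℝ) (s : Ω → Prop) : ℝ :=
  ∑ ω, @ite _ (s ω) (Classical.propDecidable _) (p ω) 0

/-- Shannon entropy (base 2) of the random variable `X` under the pmf `p`. -/
def H {Ω α : Type*} [Fintype Ω] [Fintype α] (p : Ω → ℝ) (X : Ω → α) : ℝ :=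
  ∑ x, -(pr p X x * Real.logb 2 (pr p X x))

/-- Conditional Shannon entropy `H(X|Y) = H(X,Y) - H(Y)` (base 2). -/
def Hc {Ω α β : Type*} [Fintype Ω] [Fintype α] [Fintype β]
    (p : Ω → ℝ) (X : Ω → α) (Y : Ω → β) : ℝ :=
  H p (fun ω => (X ω, Y ω)) - H p Y

/-- Mutual information `I(X;Y) = H(X) + H(Y) - H(X,Y)` (base 2). -/
def MI {Ω α β : Type*} [Fintype Ω] [Fintype α] [Fintype β]
    (p : Ω → ℝ) (X : Ω → α) (Y : Ω → β) : ℝ :=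
  H p X + H p Y - H p (fun ω => (X ω, Y ω))

/-- Conditional mutual information `I(X;Y|Z) = H(X|Z) - H(X|Y,Z)` (base 2). -/
def cMI {Ω α β γ : Type*} [Fintype Ω] [Fintype α] [Fintype β] [Fintype γ]
    (p : Ω → ℝ) (X : Ω → α) (Y : Ω → β) (Z : Ω → γ) : ℝ :=
  Hc p X Z - Hc p X (fun ω => (Y ω, Z ω))

/-- `p` is a probability mass function on the finite type `Ω`. -/
def IsPMF {Ω : Type*} [Fintype Ω] (p : Ω → ℝ) : Prop :=
  (∀ ω, 0 ≤ p ω) ∧ ∑ ω, p ω = 1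

/-- The Markov chain `X − Y − Z`: `X` and `Z` are conditionally independent given `Y`. -/
def Markov {Ω α β γ : Type*} [Fintype Ω] (p : Ω → ℝ)
    (X : Ω → α) (Y : Ω → β) (Z : Ω → γ) : Prop :=
  ∀ x y z,
    pr p (fun ω => (X ω, Y ω, Z ω)) (x, y, z) * pr p Y y =
      pr p (fun ω => (X ω, Y ω)) (x, y) * pr p (fun ω => (Y ω, Z ω)) (y, z)

/-- `k` is a conditional probability kernel from `α` to `β`. -/
def IsKernel {α β : Type*} [Fintype β] (k : α → β → ℝ) : Prop :=
  ∀ a, (∀ b, 0 ≤ k a b) ∧ ∑ b, k a b = 1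

/-- The i.i.d. block pmf on `Fin N → S` induced by the single-letter pmf `p` on `S`. -/
def blk {S : Type*} [Fintype S] (N : ℕ) (p : S → ℝ) : (Fin N → S) → ℝ :=
  fun ω => ∏ i, p (ω i)

end SSW

open SSW

section Aux1

open Real Finset

variable {Ω Ω' α β γ δ : Type*} [Fintype Ω] [Fintype Ω']

lemma pr_nonneg (p : Ω → ℝ) (hp : ∀ ω, 0 ≤ p ω) (X : Ω → α) (x : α) :
    0 ≤ pr p X x := by
  classical
  refine Finset.sum_nonneg fun ω _ => ?_
  split_ifs
  · exact hp ω
  · exact le_rfl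

lemma pr_le (p : Ω → ℝ) (hp : ∀ ω, 0 ≤ p ω) (X : Ω → α) (Y : Ω → β) (x : α) (y : β)
    (h : ∀ ω, X ω = x → Y ω = y) : pr p X x ≤ pr p Y y := by
  classical
  refine Finset.sum_le_sum fun ω _ => ?_
  by_cases hx : X ω = x
  · rw [if_pos hx, if_pos (h ω hx)]
  · rw [if_neg hx]
    split_ifs with h'
    · exact hp ω
    · exact le_rfl

lemma pr_snd [Fintype α] (p : Ω → ℝ) (X : Ω → α) (Y : Ω → β) (y : β) :
    ∑ x, pr p (fun ω => (X ω, Y ω)) (x, y) = pr p Y y := by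
  classical
  unfold pr
  rw [Finset.sum_comm]
  refine Finset.sum_congr rfl fun ω _ => ?_
  simp [Prod.ext_iff, ite_and, Finset.sum_ite_eq]

end Aux1
section Aux1b
open Real Finset
variable {Ω Ω' α β γ δ : Type*} [Fintype Ω] [Fintype Ω']

lemma pr_middle [Fintype β] (p : Ω → ℝ) (X : Ω → α) (Y : Ω → β) (Z : Ω → γ)
    (x : α) (z : γ) :
    ∑ y, pr p (fun ω => (X ω, Y ω, Z ω)) (x, y, z) =
      pr p (fun ω => (X ω, Z ω)) (x, z) := by
  classical
  unfold pr
  rw [Finset.sum_comm]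
  refine Finset.sum_congr rfl fun ω _ => ?_
  simp only [Prod.ext_iff]
  by_cases hxz : X ω = x ∧ Z ω = z
  · rw [if_pos hxz, Finset.sum_congr rfl
      (fun y (_ : y ∈ Finset.univ) => if_congr (show (X ω = x ∧ Y ω = y ∧ Z ω = z) ↔ Y ω = y by tauto) rfl rfl)]
    simp [Finset.sum_ite_eq]
  · rw [if_neg hxz]
    exact Finset.sum_eq_zero fun y _ => if_neg (by tauto)

lemma pr_comp_inj (p : Ω → ℝ) (X : Ω → α) (g : α → β) (hg : Function.Injective g) (a : α) :
    pr p (fun ω => g (X ω)) (g a) = pr p X a := by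
  classical
  unfold pr
  exact Finset.sum_congr rfl fun ω _ => if_congr hg.eq_iff rfl rfl

lemma pr_comp_zero (p : Ω → ℝ) (X : Ω → α) (g : α → β) (b : β) (h : ∀ a, g a ≠ b) :
    pr p (fun ω => g (X ω)) b = 0 :=
  Finset.sum_eq_zero fun ω _ => if_neg (h (X ω))

lemma H_comp_inj [Fintype α] [Fintype β] (p : Ω → ℝ) (X : Ω → α) (g : α → β)
    (hg : Function.Injective g) :
    H p (fun ω => g (X ω)) = H p X := by
  classical
  unfold H
  rw [← Finset.sum_subset (Finset.subset_univ (Finset.univ.image g))]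
  · rw [Finset.sum_image (fun a _ b _ h => hg h)]
    exact Finset.sum_congr rfl fun a _ => by rw [pr_comp_inj p X g hg]
  · intro b _ hb
    have : ∀ a, g a ≠ b := by
      intro a hab; exact hb (Finset.mem_image.mpr ⟨a, Finset.mem_univ a, hab⟩)
    rw [pr_comp_zero p X g b this]
    simp

lemma Hc_comp_inj_right [Fintype α] [Fintype β] [Fintype γ] (p : Ω → ℝ)
    (X : Ω → α) (W : Ω → β) (g : β → γ) (hg : Function.Injective g) :
    Hc p X (fun ω => g (W ω)) = Hc p X W := by
  unfold Hc
  have h1 : H p (fun ω => (X ω, g (W ω))) = H p (fun ω => (X ω, W ω)) :=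
    H_comp_inj p (fun ω => (X ω, W ω)) (fun q => (q.1, g q.2))
      (fun q r h => by
        cases q; cases r
        simp only [Prod.mk.injEq] at h ⊢
        exact ⟨h.1, hg h.2⟩)
  rw [h1, H_comp_inj p W g hg]

lemma Hc_chain [Fintype α] [Fintype β] [Fintype γ] (p : Ω → ℝ)
    (X : Ω → α) (Y : Ω → β) (W : Ω → γ) :
    Hc p (fun ω => (X ω, Y ω)) W =
      Hc p X (fun ω => (Y ω, W ω)) + Hc p Y W := by
  unfold Hc
  have h1 : H p (fun ω => ((X ω, Y ω), W ω)) = H p (fun ω => (X ω, Y ω, W ω)) := by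
    have := H_comp_inj p (fun ω => (X ω, Y ω, W ω))
      (fun q : α × β × γ => ((q.1, q.2.1), q.2.2))
      (fun q r h => by
        obtain ⟨q1, q2, q3⟩ := q; obtain ⟨r1, r2, r3⟩ := r
        simp only [Prod.mk.injEq] at h ⊢
        tauto)
    simpa only [] using this
  rw [h1]; ring

lemma pr_equiv (e : Ω' ≃ Ω) (p : Ω → ℝ) (X : Ω → α) (x : α) :
    pr (fun ω' => p (e ω')) (fun ω' => X (e ω')) x = pr p X x := by
  classical
  unfold pr
  exact Fintype.sum_equiv e _ _ fun ω' => rfl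

lemma H_equiv [Fintype α] (e : Ω' ≃ Ω) (p : Ω → ℝ) (X : Ω → α) :
    H (fun ω' => p (e ω')) (fun ω' => X (e ω')) = H p X := by
  unfold H
  exact Finset.sum_congr rfl fun x _ => by rw [pr_equiv e p X x]

lemma Hc_equiv [Fintype α] [Fintype β] (e : Ω' ≃ Ω) (p : Ω → ℝ) (X : Ω → α) (W : Ω → β) :
    Hc (fun ω' => p (e ω')) (fun ω' => X (e ω')) (fun ω' => W (e ω')) = Hc p X W := by
  unfold Hc
  rw [H_equiv e p W, H_equiv e p (fun ω => (X ω, W ω))]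

end Aux1b
section Aux2
open Real Finset
variable {Ω α β γ : Type*} [Fintype Ω]

lemma Hc_eq_sum [Fintype α] [Fintype β] (p : Ω → ℝ) (hp : ∀ ω, 0 ≤ p ω)
    (X : Ω → α) (W : Ω → β) :
    Hc p X W = ∑ w, ∑ x, pr p (fun ω => (X ω, W ω)) (x, w) *
      Real.logb 2 (pr p W w / pr p (fun ω => (X ω, W ω)) (x, w)) := by
  unfold Hc H
  rw [Fintype.sum_prod_type, Finset.sum_comm, ← Finset.sum_sub_distrib]
  refine Finset.sum_congr rfl fun w _ => ?_
  have key : pr p W w * Real.logb 2 (pr p W w) =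
      ∑ x, pr p (fun ω => (X ω, W ω)) (x, w) * Real.logb 2 (pr p W w) := by
    rw [← Finset.sum_mul, pr_snd p X W w]
  rw [sub_neg_eq_add, key, ← Finset.sum_add_distrib]
  refine Finset.sum_congr rfl fun x _ => ?_
  rcases (pr_nonneg p hp (fun ω => (X ω, W ω)) (x, w)).eq_or_lt with h0 | hpos
  · rw [← h0]; simp
  · have hW : 0 < pr p W w :=
      lt_of_lt_of_le hpos (pr_le p hp _ W (x, w) w fun ω h => congrArg Prod.snd h)
    rw [Real.logb_div hW.ne' hpos.ne']
    ring

lemma log_term_le {a b c d : ℝ} (ha : 0 ≤ a) (hc : 0 ≤ c)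
    (hab : a ≤ b) (hac : a ≤ c) (hbd : b ≤ d) :
    a * Real.logb 2 (b / a) ≤
      a * Real.logb 2 (d / c) + (1 / Real.log 2) * (b * c / d - a) := by
  have hlog2 : 0 < Real.log 2 := Real.log_pos one_lt_two
  rcases ha.eq_or_lt with h0 | hapos
  · rw [← h0]
    have hb : 0 ≤ b := h0 ▸ hab
    have hd : 0 ≤ d := le_trans hb hbd
    have : 0 ≤ (1 / Real.log 2) * (b * c / d) :=
      mul_nonneg (one_div_nonneg.mpr hlog2.le) (div_nonneg (mul_nonneg hb hc) hd)
    simpa using this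
  · have hb : 0 < b := lt_of_lt_of_le hapos hab
    have hcc : 0 < c := lt_of_lt_of_le hapos hac
    have hd : 0 < d := lt_of_lt_of_le hb hbd
    have ht : 0 < b * c / (a * d) := by positivity
    have hle := Real.log_le_sub_one_of_pos ht
    have hlogdiv : Real.log (b / a) - Real.log (d / c) = Real.log (b * c / (a * d)) := by
      rw [Real.log_div hb.ne' hapos.ne', Real.log_div hd.ne' hcc.ne',
        Real.log_div (mul_pos hb hcc).ne' (mul_pos hapos hd).ne',
        Real.log_mul hb.ne' hcc.ne', Real.log_mul hapos.ne' hd.ne']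
      ring
    have key : a * (Real.log (b / a) - Real.log (d / c)) ≤ b * c / d - a := by
      calc a * (Real.log (b / a) - Real.log (d / c)) = a * Real.log (b * c / (a * d)) := by
            rw [hlogdiv]
        _ ≤ a * (b * c / (a * d) - 1) :=
            mul_le_mul_of_nonneg_left hle hapos.le
        _ = b * c / d - a := by field_simp
    rw [Real.logb, Real.logb]
    rw [div_eq_mul_inv (Real.log (b/a)), div_eq_mul_inv (Real.log (d/c)), one_div]
    have h2 := mul_le_mul_of_nonneg_right key (by positivity : (0:ℝ) ≤ (Real.log 2)⁻¹)
    nlinarith [h2]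

variable [Fintype α] [Fintype β] [Fintype γ]

lemma triple_le (P3 : α → β → γ → ℝ) (P2 : α → γ → ℝ) (PYZ : β → γ → ℝ) (PZ : γ → ℝ)
    (hP3nn : ∀ x y z, 0 ≤ P3 x y z) (hPYZnn : ∀ y z, 0 ≤ PYZ y z)
    (hP2nn : ∀ x z, 0 ≤ P2 x z) (hPZnn : ∀ z, 0 ≤ PZ z)
    (h32 : ∀ x y z, P3 x y z ≤ P2 x z) (h3YZ : ∀ x y z, P3 x y z ≤ PYZ y z)
    (hYZZ : ∀ y z, PYZ y z ≤ PZ z)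
    (hmarg2 : ∀ x z, ∑ y, P3 x y z = P2 x z)
    (hmargYZ : ∀ y z, ∑ x, P3 x y z = PYZ y z)
    (hmargZ : ∀ z, ∑ x, P2 x z = PZ z) :
    ∑ y, ∑ z, ∑ x, P3 x y z * Real.logb 2 (PYZ y z / P3 x y z) ≤
      ∑ z, ∑ x, P2 x z * Real.logb 2 (PZ z / P2 x z) := by
  calc ∑ y, ∑ z, ∑ x, P3 x y z * Real.logb 2 (PYZ y z / P3 x y z)
      ≤ ∑ y, ∑ z, ∑ x, (P3 x y z * Real.logb 2 (PZ z / P2 x z)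
          + (1 / Real.log 2) * (PYZ y z * P2 x z / PZ z - P3 x y z)) := by
        refine Finset.sum_le_sum fun y _ => Finset.sum_le_sum fun z _ =>
          Finset.sum_le_sum fun x _ => ?_
        exact log_term_le (hP3nn x y z) (hP2nn x z) (h3YZ x y z) (h32 x y z) (hYZZ y z)
    _ = (∑ y, ∑ z, ∑ x, P3 x y z * Real.logb 2 (PZ z / P2 x z))
          + ∑ y, ∑ z, (1 / Real.log 2) *
            ((PYZ y z * ∑ x, P2 x z) / PZ z - ∑ x, P3 x y z) := by
        rw [← Finset.sum_add_distrib]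
        refine Finset.sum_congr rfl fun y _ => ?_
        rw [← Finset.sum_add_distrib]
        refine Finset.sum_congr rfl fun z _ => ?_
        rw [Finset.sum_add_distrib]
        congr 1
        rw [← Finset.mul_sum, Finset.sum_sub_distrib, ← Finset.sum_div, ← Finset.mul_sum]
    _ = (∑ y, ∑ z, ∑ x, P3 x y z * Real.logb 2 (PZ z / P2 x z)) + 0 := by
        congr 1
        refine Finset.sum_eq_zero fun y _ => Finset.sum_eq_zero fun z _ => ?_
        rw [hmargZ z, hmargYZ y z]
        rcases (hPZnn z).eq_or_lt with h0 | hpos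
        · have hyz0 : PYZ y z = 0 := le_antisymm (h0 ▸ hYZZ y z) (hPYZnn y z)
          simp [hyz0]
        · rw [mul_div_assoc, div_self hpos.ne', mul_one, sub_self, mul_zero]
    _ = ∑ z, ∑ x, P2 x z * Real.logb 2 (PZ z / P2 x z) := by
        rw [add_zero, Finset.sum_comm]
        refine Finset.sum_congr rfl fun z _ => ?_
        rw [Finset.sum_comm]
        refine Finset.sum_congr rfl fun x _ => ?_
        rw [← Finset.sum_mul, hmarg2 x z]

lemma triple_eq (P3 : α → β → γ → ℝ) (P2 : α → γ → ℝ) (PYZ : β → γ → ℝ) (PZ : γ → ℝ)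
    (hP3nn : ∀ x y z, 0 ≤ P3 x y z)
    (h32 : ∀ x y z, P3 x y z ≤ P2 x z) (h3YZ : ∀ x y z, P3 x y z ≤ PYZ y z)
    (hYZZ : ∀ y z, PYZ y z ≤ PZ z)
    (hmarg2 : ∀ x z, ∑ y, P3 x y z = P2 x z)
    (hM : ∀ x y z, P3 x y z * PZ z = P2 x z * PYZ y z) :
    ∑ y, ∑ z, ∑ x, P3 x y z * Real.logb 2 (PYZ y z / P3 x y z) =
      ∑ z, ∑ x, P2 x z * Real.logb 2 (PZ z / P2 x z) := by
  have step : ∀ y z x, P3 x y z * Real.logb 2 (PYZ y z / P3 x y z)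
      = P3 x y z * Real.logb 2 (PZ z / P2 x z) := by
    intro y z x
    rcases (hP3nn x y z).eq_or_lt with h0 | hpos
    · rw [← h0]; ring
    · have hyz : 0 < PYZ y z := lt_of_lt_of_le hpos (h3YZ x y z)
      have h2 : 0 < P2 x z := lt_of_lt_of_le hpos (h32 x y z)
      have hz : 0 < PZ z := lt_of_lt_of_le hyz (hYZZ y z)
      have : PYZ y z / P3 x y z = PZ z / P2 x z := by
        rw [div_eq_div_iff hpos.ne' h2.ne']
        nlinarith [hM x y z]
      rw [this]
  calc ∑ y, ∑ z, ∑ x, P3 x y z * Real.logb 2 (PYZ y z / P3 x y z)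
      = ∑ y, ∑ z, ∑ x, P3 x y z * Real.logb 2 (PZ z / P2 x z) := by
        exact Finset.sum_congr rfl fun y _ => Finset.sum_congr rfl fun z _ =>
          Finset.sum_congr rfl fun x _ => step y z x
    _ = ∑ z, ∑ x, P2 x z * Real.logb 2 (PZ z / P2 x z) := by
        rw [Finset.sum_comm]
        refine Finset.sum_congr rfl fun z _ => ?_
        rw [Finset.sum_comm]
        refine Finset.sum_congr rfl fun x _ => ?_
        rw [← Finset.sum_mul, hmarg2 x z]

end Aux2
section Aux3
open Real Finset
variable {Ω α β γ : Type*} [Fintype Ω] [Fintype α] [Fintype β] [Fintype γ]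

lemma cond_reduce (p : Ω → ℝ) (hp : ∀ ω, 0 ≤ p ω)
    (X : Ω → α) (Y : Ω → β) (Z : Ω → γ) :
    Hc p X (fun ω => (Y ω, Z ω)) ≤ Hc p X Z := by
  rw [Hc_eq_sum p hp X (fun ω => (Y ω, Z ω)), Hc_eq_sum p hp X Z,
    Fintype.sum_prod_type]
  refine triple_le (fun x y z => pr p (fun ω => (X ω, Y ω, Z ω)) (x, y, z))
    (fun x z => pr p (fun ω => (X ω, Z ω)) (x, z))
    (fun y z => pr p (fun ω => (Y ω, Z ω)) (y, z)) (fun z => pr p Z z)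
    (fun x y z => pr_nonneg p hp _ _) (fun y z => pr_nonneg p hp _ _)
    (fun x z => pr_nonneg p hp _ _) (fun z => pr_nonneg p hp _ _)
    (fun x y z => pr_le p hp _ _ _ (x, z) fun ω h => by
      simp only [Prod.mk.injEq] at h ⊢; tauto)
    (fun x y z => pr_le p hp _ _ _ (y, z) fun ω h => by
      simp only [Prod.mk.injEq] at h ⊢; tauto)
    (fun y z => pr_le p hp _ _ _ z fun ω h => by
      simp only [Prod.mk.injEq] at h ⊢; tauto)
    (fun x z => pr_middle p X Y Z x z)
    (fun y z => pr_snd p X _ (y, z))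
    (fun z => pr_snd p X Z z)

lemma markov_Hc (p : Ω → ℝ) (hp : ∀ ω, 0 ≤ p ω)
    (X : Ω → α) (Y : Ω → β) (Z : Ω → γ)
    (hM : ∀ x y z, pr p (fun ω => (X ω, Y ω, Z ω)) (x, y, z) * pr p Z z =
      pr p (fun ω => (X ω, Z ω)) (x, z) * pr p (fun ω => (Y ω, Z ω)) (y, z)) :
    Hc p X (fun ω => (Y ω, Z ω)) = Hc p X Z := by
  rw [Hc_eq_sum p hp X (fun ω => (Y ω, Z ω)), Hc_eq_sum p hp X Z,
    Fintype.sum_prod_type]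
  refine triple_eq (fun x y z => pr p (fun ω => (X ω, Y ω, Z ω)) (x, y, z))
    (fun x z => pr p (fun ω => (X ω, Z ω)) (x, z))
    (fun y z => pr p (fun ω => (Y ω, Z ω)) (y, z)) (fun z => pr p Z z)
    (fun x y z => pr_nonneg p hp _ _)
    (fun x y z => pr_le p hp _ _ _ (x, z) fun ω h => by
      simp only [Prod.mk.injEq] at h ⊢; tauto)
    (fun x y z => pr_le p hp _ _ _ (y, z) fun ω h => by
      simp only [Prod.mk.injEq] at h ⊢; tauto)
    (fun y z => pr_le p hp _ _ _ z fun ω h => by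
      simp only [Prod.mk.injEq] at h ⊢; tauto)
    (fun x z => pr_middle p X Y Z x z)
    hM

end Aux3

section Aux4
open Real Finset
variable {Ω₁ Ω₂ α β γ κ' δ' : Type*} [Fintype Ω₁] [Fintype Ω₂]

lemma pr_split (p₁ : Ω₁ → ℝ) (p₂ : Ω₂ → ℝ) (V : Ω₁ × Ω₂ → δ') (val : δ')
    (φ : Ω₁ → Prop) (ψ : Ω₂ → Prop) (h : ∀ ω : Ω₁ × Ω₂, V ω = val ↔ (φ ω.1 ∧ ψ ω.2)) :
    pr (fun ω : Ω₁ × Ω₂ => p₁ ω.1 * p₂ ω.2) V val =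
      (∑ u, @ite _ (φ u) (Classical.propDecidable _) (p₁ u) 0) *
        (∑ v, @ite _ (ψ v) (Classical.propDecidable _) (p₂ v) 0) := by
  classical
  unfold pr
  rw [Finset.sum_mul_sum, Fintype.sum_prod_type]
  refine Finset.sum_congr rfl fun u _ => Finset.sum_congr rfl fun v _ => ?_
  rw [if_congr (h (u, v)) rfl rfl]
  by_cases h1 : φ u <;> by_cases h2 : ψ v <;> simp [h1, h2]

lemma markov_split (p₁ : Ω₁ → ℝ) (p₂ : Ω₂ → ℝ)
    (ξ : Ω₂ → α) (η : Ω₁ → β) (W : Ω₁ → γ) (g : γ → Ω₂ → κ')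
    (x : α) (y : β) (z : κ' × γ) :
    pr (fun ω : Ω₁ × Ω₂ => p₁ ω.1 * p₂ ω.2)
        (fun ω => (ξ ω.2, η ω.1, (g (W ω.1) ω.2, W ω.1))) (x, y, z) *
      pr (fun ω : Ω₁ × Ω₂ => p₁ ω.1 * p₂ ω.2)
        (fun ω => (g (W ω.1) ω.2, W ω.1)) z =
    pr (fun ω : Ω₁ × Ω₂ => p₁ ω.1 * p₂ ω.2)
        (fun ω => (ξ ω.2, (g (W ω.1) ω.2, W ω.1))) (x, z) *
      pr (fun ω : Ω₁ × Ω₂ => p₁ ω.1 * p₂ ω.2)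
        (fun ω => (η ω.1, (g (W ω.1) ω.2, W ω.1))) (y, z) := by
  classical
  obtain ⟨k, c⟩ := z
  rw [pr_split p₁ p₂ _ _ (fun u => η u = y ∧ W u = c) (fun v => ξ v = x ∧ g c v = k)
    (fun ω => by
      constructor
      · intro hh
        simp only [Prod.mk.injEq] at hh
        obtain ⟨h1, h2, h3, h4⟩ := hh
        exact ⟨⟨h2, h4⟩, h1, h4 ▸ h3⟩
      · rintro ⟨⟨h2, h4⟩, h1, h3⟩
        simp only [Prod.mk.injEq]
        exact ⟨h1, h2, h4 ▸ h3, h4⟩)]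
  rw [pr_split p₁ p₂ _ _ (fun u => W u = c) (fun v => g c v = k)
    (fun ω => by
      constructor
      · intro hh
        simp only [Prod.mk.injEq] at hh
        exact ⟨hh.2, hh.2 ▸ hh.1⟩
      · rintro ⟨h4, h3⟩
        simp only [Prod.mk.injEq]
        exact ⟨h4 ▸ h3, h4⟩)]
  rw [pr_split p₁ p₂ _ _ (fun u => W u = c) (fun v => ξ v = x ∧ g c v = k)
    (fun ω => by
      constructor
      · intro hh
        simp only [Prod.mk.injEq] at hh
        obtain ⟨h1, h3, h4⟩ := hh
        exact ⟨h4, h1, h4 ▸ h3⟩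
      · rintro ⟨h4, h1, h3⟩
        simp only [Prod.mk.injEq]
        exact ⟨h1, h4 ▸ h3, h4⟩)]
  rw [pr_split p₁ p₂ _ _ (fun u => η u = y ∧ W u = c) (fun v => g c v = k)
    (fun ω => by
      constructor
      · intro hh
        simp only [Prod.mk.injEq] at hh
        obtain ⟨h1, h3, h4⟩ := hh
        exact ⟨⟨h1, h4⟩, h4 ▸ h3⟩
      · rintro ⟨⟨h1, h4⟩, h3⟩
        simp only [Prod.mk.injEq]
        exact ⟨h1, h4 ▸ h3, h4⟩)]
  ring

end Aux4
section Aux5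
open Finset

variable {S : Type*}

def eSplit (S : Type*) (iv m N : ℕ) (h : iv + m = N) :
    ((Fin iv → S) × (Fin m → S)) ≃ (Fin N → S) where
  toFun uv j := if hj : j.val < iv then uv.1 ⟨j.val, hj⟩ else uv.2 ⟨j.val - iv, by omega⟩
  invFun ω := (fun j => ω ⟨j.val, by omega⟩, fun j => ω ⟨iv + j.val, by omega⟩)
  left_inv := by
    rintro ⟨u, v⟩
    refine Prod.ext ?_ ?_
    · funext j
      simp only
      rw [dif_pos j.isLt]
    · funext j
      simp only
      rw [dif_neg (by omega)]
      congr 1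
      ext
      simp
  right_inv := by
    intro ω
    funext j
    simp only
    by_cases hj : j.val < iv
    · rw [dif_pos hj]
    · rw [dif_neg hj]
      congr 1
      ext
      simp
      omega

lemma eSplit_lt {iv m N : ℕ} (h : iv + m = N) (u : Fin iv → S) (v : Fin m → S)
    (j : Fin N) (hj : j.val < iv) :
    eSplit S iv m N h (u, v) j = u ⟨j.val, hj⟩ := dif_pos hj

lemma eSplit_ge {iv m N : ℕ} (h : iv + m = N) (u : Fin iv → S) (v : Fin m → S)
    (j : Fin N) (hj : ¬ j.val < iv) :
    eSplit S iv m N h (u, v) j = v ⟨j.val - iv, by omega⟩ := dif_neg hj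

lemma eSplit_prod {iv m N : ℕ} (h : iv + m = N) (F : S → ℝ) (u : Fin iv → S) (v : Fin m → S) :
    ∏ j : Fin N, F (eSplit S iv m N h (u, v) j) =
      (∏ j, F (u j)) * (∏ j, F (v j)) := by
  rw [← (finSumFinEquiv.trans (finCongr h)).prod_comp
    (fun j => F (eSplit S iv m N h (u, v) j))]
  rw [Fintype.prod_sum_type]
  congr 1
  · refine Finset.prod_congr rfl fun j _ => ?_
    congr 1
    rw [eSplit_lt h u v _ (by simp)]
    exact congrArg u (Fin.ext (by simp))
  · refine Finset.prod_congr rfl fun j _ => ?_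
    congr 1
    rw [eSplit_ge h u v _ (by simp)]
    refine congrArg v (Fin.ext ?_)
    have : (((finSumFinEquiv.trans (finCongr h)) (Sum.inr j)) : ℕ) = iv + j.val := by simp
    simp only [this]
    omega

lemma blk_eSplit {S : Type*} [Fintype S] {iv m N : ℕ} (h : iv + m = N) (p : S → ℝ)
    (u : Fin iv → S) (v : Fin m → S) :
    blk N p (eSplit S iv m N h (u, v)) = blk iv p u * blk m p v :=
  eSplit_prod h p u v

end Aux5
section Aux6
open Finset

lemma prod_markov_Hc {Ω₁ Ω₂ α β γ κ' : Type*} [Fintype Ω₁] [Fintype Ω₂]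
    [Fintype α] [Fintype β] [Fintype γ] [Fintype κ']
    (p₁ : Ω₁ → ℝ) (p₂ : Ω₂ → ℝ) (hq : ∀ ω : Ω₁ × Ω₂, 0 ≤ p₁ ω.1 * p₂ ω.2)
    (ξ : Ω₂ → α) (η : Ω₁ → β) (W : Ω₁ → γ) (g : γ → Ω₂ → κ') :
    Hc (fun ω : Ω₁ × Ω₂ => p₁ ω.1 * p₂ ω.2) (fun ω => ξ ω.2)
        (fun ω => (g (W ω.1) ω.2, η ω.1, W ω.1)) =
      Hc (fun ω : Ω₁ × Ω₂ => p₁ ω.1 * p₂ ω.2) (fun ω => ξ ω.2)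
        (fun ω => (g (W ω.1) ω.2, W ω.1)) := by
  have hσ : Function.Injective (fun w : β × (κ' × γ) => (w.2.1, w.1, w.2.2)) := by
    rintro ⟨a, k, c⟩ ⟨a', k', c'⟩ h
    simp only [Prod.mk.injEq] at h ⊢
    tauto
  calc Hc (fun ω : Ω₁ × Ω₂ => p₁ ω.1 * p₂ ω.2) (fun ω => ξ ω.2)
        (fun ω => (g (W ω.1) ω.2, η ω.1, W ω.1))
      = Hc (fun ω : Ω₁ × Ω₂ => p₁ ω.1 * p₂ ω.2) (fun ω => ξ ω.2)
          (fun ω => (η ω.1, (g (W ω.1) ω.2, W ω.1))) :=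
        Hc_comp_inj_right (fun ω : Ω₁ × Ω₂ => p₁ ω.1 * p₂ ω.2) (fun ω => ξ ω.2)
          (fun ω => (η ω.1, (g (W ω.1) ω.2, W ω.1)))
          (fun w : β × (κ' × γ) => (w.2.1, w.1, w.2.2)) hσ
    _ = Hc (fun ω : Ω₁ × Ω₂ => p₁ ω.1 * p₂ ω.2) (fun ω => ξ ω.2)
          (fun ω => (g (W ω.1) ω.2, W ω.1)) :=
        markov_Hc (fun ω : Ω₁ × Ω₂ => p₁ ω.1 * p₂ ω.2) hq (fun ω => ξ ω.2)
          (fun ω => η ω.1) (fun ω => (g (W ω.1) ω.2, W ω.1))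
          (fun x y z => markov_split p₁ p₂ ξ η W g x y z)

def consLast {α' : Type*} (n : ℕ) (w : α' × (Fin n → α')) : Fin (n + 1) → α' :=
  fun j => if h : j.val < n then w.2 ⟨j.val, h⟩ else w.1

lemma consLast_inj {α' : Type*} (n : ℕ) : Function.Injective (consLast (α' := α') n) := by
  have : Function.LeftInverse
      (fun w : Fin (n + 1) → α' => (w (Fin.last n), fun j : Fin n => w j.castSucc))
      (consLast (α' := α') n) := by
    rintro ⟨a, v⟩
    refine Prod.ext ?_ ?_
    · show consLast n (a, v) (Fin.last n) = a
      unfold consLast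
      rw [dif_neg (by simp)]
    · funext j
      show consLast n (a, v) j.castSucc = v j
      unfold consLast
      rw [dif_pos (by simp)]
      exact congrArg v (Fin.ext (by simp))
  exact this.injective

lemma chain_claim {S α' κ' : Type*} [Fintype S] [Fintype α'] [Fintype κ'] (N : ℕ)
    (P : (Fin N → S) → ℝ) (K : (Fin N → S) → κ') (f : S → α') :
    ∀ n, ∀ hn : n ≤ N,
      Hc P (fun ω => fun j : Fin n => f (ω ⟨j.val, lt_of_lt_of_le j.isLt hn⟩)) K =
        ∑ i : Fin n, Hc P (fun ω => f (ω ⟨i.val, lt_of_lt_of_le i.isLt hn⟩))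
          (fun ω => (K ω,
            fun j : Fin i.val => f (ω ⟨j.val, lt_of_lt_of_le (lt_trans j.isLt i.isLt) hn⟩))) := by
  intro n
  induction n with
  | zero =>
    intro hn
    rw [Finset.univ_eq_empty, Finset.sum_empty]
    unfold Hc
    have hg : Function.Injective (fun k : κ' => ((fun j : Fin 0 => (j.elim0 : α')), k)) :=
      fun a b h => congrArg Prod.snd h
    have := H_comp_inj P K _ hg
    have heq : (fun ω => ((fun j : Fin 0 => f (ω ⟨j.val, lt_of_lt_of_le j.isLt hn⟩)), K ω)) =
        (fun ω => ((fun j : Fin 0 => (j.elim0 : α')), K ω)) := by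
      funext ω
      refine Prod.ext ?_ rfl
      funext j
      exact j.elim0
    rw [heq]
    rw [show (fun ω => ((fun j : Fin 0 => (j.elim0 : α')), K ω)) =
      (fun ω => (fun k : κ' => ((fun j : Fin 0 => (j.elim0 : α')), k)) (K ω)) from rfl]
    rw [this, sub_self]
  | succ n ih =>
    intro hn
    have hn' : n ≤ N := le_trans (Nat.le_succ n) hn
    rw [Fin.sum_univ_castSucc]
    have hlast : (Fin.last n).val = n := rfl
    -- rewrite LHS entropy via consLast
    have hXeq : (fun ω : Fin N → S =>
        fun j : Fin (n + 1) => f (ω ⟨j.val, lt_of_lt_of_le j.isLt hn⟩)) =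
        (fun ω => consLast n (f (ω ⟨n, hn⟩),
          fun j : Fin n => f (ω ⟨j.val, lt_of_lt_of_le j.isLt hn'⟩))) := by
      funext ω
      funext j
      unfold consLast
      by_cases hj : j.val < n
      · rw [dif_pos hj]
      · rw [dif_neg hj]
        have : j.val = n := by omega
        exact congrArg f (congrArg ω (Fin.ext this))
    have step1 : Hc P (fun ω : Fin N → S =>
        fun j : Fin (n + 1) => f (ω ⟨j.val, lt_of_lt_of_le j.isLt hn⟩)) K =
        Hc P (fun ω => ((f (ω ⟨n, hn⟩)),
          fun j : Fin n => f (ω ⟨j.val, lt_of_lt_of_le j.isLt hn'⟩))) K := by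
      unfold Hc
      rw [hXeq]
      congr 1
      exact H_comp_inj P
        (fun ω => ((f (ω ⟨n, hn⟩),
          fun j : Fin n => f (ω ⟨j.val, lt_of_lt_of_le j.isLt hn'⟩)), K ω))
        (fun w : (α' × (Fin n → α')) × κ' => (consLast n w.1, w.2))
        (fun a b h => by
          obtain ⟨a1, a2⟩ := a; obtain ⟨b1, b2⟩ := b
          simp only [Prod.mk.injEq] at h ⊢
          exact ⟨consLast_inj n h.1, h.2⟩)
    rw [step1, Hc_chain P (fun ω => f (ω ⟨n, hn⟩))
      (fun ω => fun j : Fin n => f (ω ⟨j.val, lt_of_lt_of_le j.isLt hn'⟩)) K, ih hn']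
    rw [add_comm]
    congr 1
    -- last term: swap the conditioner
    exact (Hc_comp_inj_right P (fun ω => f (ω ⟨n, hn⟩))
      (fun ω => ((fun j : Fin n => f (ω ⟨j.val, lt_of_lt_of_le j.isLt hn'⟩)), K ω))
      (fun w : (Fin n → α') × κ' => (w.2, w.1))
      (fun a b h => by
        obtain ⟨a1, a2⟩ := a; obtain ⟨b1, b2⟩ := b
        simp only [Prod.mk.injEq] at h ⊢
        tauto)).symm

end Aux6
section Part2
open Finset

lemma part2 {𝒜 𝒞 κ : Type} [Fintype 𝒜] [Fintype 𝒞] [Fintype κ]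
    (p : 𝒜 × 𝒞 → ℝ) (hp0 : ∀ s, 0 ≤ p s) (N : ℕ)
    (fC : (Fin N → 𝒞) → κ) (i : Fin N) :
    Hc (blk N p) (fun ω => (ω i).1)
        (fun ω => (fC (fun i' => (ω i').2),
          (fun j : Fin i.val => (ω ⟨j.val, j.isLt.trans i.isLt⟩).1),
          fun j : Fin i.val => (ω ⟨j.val, j.isLt.trans i.isLt⟩).2)) =
      Hc (blk N p) (fun ω => (ω i).1)
        (fun ω => (fC (fun i' => (ω i').2),
          fun j : Fin i.val => (ω ⟨j.val, j.isLt.trans i.isLt⟩).2)) := by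
  classical
  have hiv : i.val + (N - i.val) = N := by omega
  set e := eSplit (𝒜 × 𝒞) i.val (N - i.val) N hiv with he
  set p₁ : (Fin i.val → 𝒜 × 𝒞) → ℝ := blk i.val p with hp₁
  set p₂ : (Fin (N - i.val) → 𝒜 × 𝒞) → ℝ := blk (N - i.val) p with hp₂
  set ξ : (Fin (N - i.val) → 𝒜 × 𝒞) → 𝒜 :=
    fun v => (v ⟨0, Nat.sub_pos_of_lt i.isLt⟩).1 with hξ
  set η : (Fin i.val → 𝒜 × 𝒞) → (Fin i.val → 𝒜) := fun u => fun j => (u j).1 with hη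
  set Wc : (Fin i.val → 𝒜 × 𝒞) → (Fin i.val → 𝒞) := fun u => fun j => (u j).2 with hWc
  set g : (Fin i.val → 𝒞) → (Fin (N - i.val) → 𝒜 × 𝒞) → κ := fun c v =>
    fC (fun i' => if h' : i'.val < i.val then c ⟨i'.val, h'⟩
      else (v ⟨i'.val - i.val, by have := i'.isLt; omega⟩).2) with hg
  have hqnn : ∀ ω : (Fin i.val → 𝒜 × 𝒞) × (Fin (N - i.val) → 𝒜 × 𝒞),
      0 ≤ p₁ ω.1 * p₂ ω.2 := fun ω =>
    mul_nonneg (Finset.prod_nonneg fun j _ => hp0 _) (Finset.prod_nonneg fun j _ => hp0 _)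
  -- function equalities under the equiv
  have hP : (fun uv : (Fin i.val → 𝒜 × 𝒞) × (Fin (N - i.val) → 𝒜 × 𝒞) => blk N p (e uv)) =
      (fun ω => p₁ ω.1 * p₂ ω.2) := by
    funext uv
    obtain ⟨u, v⟩ := uv
    exact blk_eSplit hiv p u v
  have hX : (fun uv : (Fin i.val → 𝒜 × 𝒞) × (Fin (N - i.val) → 𝒜 × 𝒞) => ((e uv) i).1) =
      (fun ω => ξ ω.2) := by
    funext uv
    obtain ⟨u, v⟩ := uv
    show (e (u, v) i).1 = _
    rw [eSplit_ge hiv u v i (by omega)]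
    exact congrArg (fun s : 𝒜 × 𝒞 => s.1) (congrArg v (Fin.ext (Nat.sub_self i.val)))
  have hK : ∀ u v, fC (fun i' => ((e (u, v)) i').2) = g (Wc u) v := by
    intro u v
    refine congrArg fC (funext fun i' => ?_)
    by_cases h' : i'.val < i.val
    · rw [eSplit_lt hiv u v i' h']
      show (u ⟨i'.val, h'⟩).2 = _
      rw [dif_pos h']
    · rw [eSplit_ge hiv u v i' h']
      show _ = _
      rw [dif_neg h']
  have hA : ∀ u v, (fun j : Fin i.val => ((e (u, v)) ⟨j.val, j.isLt.trans i.isLt⟩).1) = η u := by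
    intro u v
    funext j
    rw [eSplit_lt hiv u v _ j.isLt]
  have hC : ∀ u v, (fun j : Fin i.val => ((e (u, v)) ⟨j.val, j.isLt.trans i.isLt⟩).2) = Wc u := by
    intro u v
    funext j
    rw [eSplit_lt hiv u v _ j.isLt]
  have hWKAC : (fun uv : (Fin i.val → 𝒜 × 𝒞) × (Fin (N - i.val) → 𝒜 × 𝒞) =>
      (fC (fun i' => ((e uv) i').2),
        (fun j : Fin i.val => ((e uv) ⟨j.val, j.isLt.trans i.isLt⟩).1),
        fun j : Fin i.val => ((e uv) ⟨j.val, j.isLt.trans i.isLt⟩).2)) =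
      (fun ω => (g (Wc ω.1) ω.2, η ω.1, Wc ω.1)) := by
    funext uv
    obtain ⟨u, v⟩ := uv
    exact congrArg₂ Prod.mk (hK u v) (congrArg₂ Prod.mk (hA u v) (hC u v))
  have hWKC : (fun uv : (Fin i.val → 𝒜 × 𝒞) × (Fin (N - i.val) → 𝒜 × 𝒞) =>
      (fC (fun i' => ((e uv) i').2),
        fun j : Fin i.val => ((e uv) ⟨j.val, j.isLt.trans i.isLt⟩).2)) =
      (fun ω => (g (Wc ω.1) ω.2, Wc ω.1)) := by
    funext uv
    obtain ⟨u, v⟩ := uv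
    exact congrArg₂ Prod.mk (hK u v) (hC u v)
  calc Hc (blk N p) (fun ω => (ω i).1)
        (fun ω => (fC (fun i' => (ω i').2),
          (fun j : Fin i.val => (ω ⟨j.val, j.isLt.trans i.isLt⟩).1),
          fun j : Fin i.val => (ω ⟨j.val, j.isLt.trans i.isLt⟩).2))
      = Hc (fun uv : (Fin i.val → 𝒜 × 𝒞) × (Fin (N - i.val) → 𝒜 × 𝒞) => blk N p (e uv))
          (fun uv => ((e uv) i).1)
          (fun uv => (fC (fun i' => ((e uv) i').2),
            (fun j : Fin i.val => ((e uv) ⟨j.val, j.isLt.trans i.isLt⟩).1),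
            fun j : Fin i.val => ((e uv) ⟨j.val, j.isLt.trans i.isLt⟩).2)) :=
        (Hc_equiv e (blk N p) (fun ω => (ω i).1)
          (fun ω => (fC (fun i' => (ω i').2),
            (fun j : Fin i.val => (ω ⟨j.val, j.isLt.trans i.isLt⟩).1),
            fun j : Fin i.val => (ω ⟨j.val, j.isLt.trans i.isLt⟩).2))).symm
    _ = Hc (fun ω : (Fin i.val → 𝒜 × 𝒞) × (Fin (N - i.val) → 𝒜 × 𝒞) => p₁ ω.1 * p₂ ω.2)
          (fun ω => ξ ω.2) (fun ω => (g (Wc ω.1) ω.2, η ω.1, Wc ω.1)) := by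
        rw [hP, hX, hWKAC]
    _ = Hc (fun ω : (Fin i.val → 𝒜 × 𝒞) × (Fin (N - i.val) → 𝒜 × 𝒞) => p₁ ω.1 * p₂ ω.2)
          (fun ω => ξ ω.2) (fun ω => (g (Wc ω.1) ω.2, Wc ω.1)) :=
        prod_markov_Hc p₁ p₂ hqnn ξ η Wc g
    _ = Hc (fun uv : (Fin i.val → 𝒜 × 𝒞) × (Fin (N - i.val) → 𝒜 × 𝒞) => blk N p (e uv))
          (fun uv => ((e uv) i).1)
          (fun uv => (fC (fun i' => ((e uv) i').2),
            fun j : Fin i.val => ((e uv) ⟨j.val, j.isLt.trans i.isLt⟩).2)) := by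
        rw [hP, hX, hWKC]
    _ = Hc (blk N p) (fun ω => (ω i).1)
        (fun ω => (fC (fun i' => (ω i').2),
          fun j : Fin i.val => (ω ⟨j.val, j.isLt.trans i.isLt⟩).2)) :=
        Hc_equiv e (blk N p) (fun ω => (ω i).1)
          (fun ω => (fC (fun i' => (ω i').2),
            fun j : Fin i.val => (ω ⟨j.val, j.isLt.trans i.isLt⟩).2))

end Part2


/-- Converse rate single-letterization for `R_A`: for `(A_i, C_i)` i.i.d. `~ p` and
`K = f_C(C^N)`, one has `H(A^N | K) ≥ Σ_i H(A_i | K, C^{i-1})`; in particular, for each `i`,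
`H(A_i | K, A^{i-1}, C^{i-1}) = H(A_i | K, C^{i-1})`, i.e. `A_i − (K, C^{i-1}) − A^{i-1}` is a
Markov chain. -/
theorem converse_rate_RA {𝒜 𝒞 κ : Type} [Fintype 𝒜] [Fintype 𝒞] [Fintype κ]
    (p : 𝒜 × 𝒞 → ℝ) (hp : IsPMF p) (N : ℕ)
    (fC : (Fin N → 𝒞) → κ) :
    Hc (blk N p) (fun ω => (fun i => (ω i).1)) (fun ω => fC (fun i => (ω i).2)) ≥
      ∑ i : Fin N,
        Hc (blk N p) (fun ω => (ω i).1)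
          (fun ω => (fC (fun i' => (ω i').2),
            fun j : Fin i.val => (ω ⟨j.val, j.isLt.trans i.isLt⟩).2)) ∧
    ∀ i : Fin N,
      Hc (blk N p) (fun ω => (ω i).1)
          (fun ω => (fC (fun i' => (ω i').2),
            (fun j : Fin i.val => (ω ⟨j.val, j.isLt.trans i.isLt⟩).1),
            fun j : Fin i.val => (ω ⟨j.val, j.isLt.trans i.isLt⟩).2)) =
        Hc (blk N p) (fun ω => (ω i).1)
          (fun ω => (fC (fun i' => (ω i').2),
            fun j : Fin i.val => (ω ⟨j.val, j.isLt.trans i.isLt⟩).2)) := by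
  classical
  have hnn : ∀ ω : Fin N → 𝒜 × 𝒞, 0 ≤ blk N p ω :=
    fun ω => Finset.prod_nonneg fun j _ => hp.1 _
  refine ⟨?_, fun i => part2 p hp.1 N fC i⟩
  have hch : Hc (blk N p) (fun ω => (fun i => (ω i).1)) (fun ω => fC (fun i => (ω i).2)) =
      ∑ i : Fin N, Hc (blk N p) (fun ω => (ω i).1)
        (fun ω => (fC (fun i => (ω i).2),
          fun j : Fin i.val => (ω ⟨j.val, j.isLt.trans i.isLt⟩).1)) :=
    chain_claim N (blk N p) (fun ω => fC (fun i => (ω i).2)) Prod.fst N le_rfl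
  rw [ge_iff_le, hch]
  refine Finset.sum_le_sum fun i _ => ?_
  calc Hc (blk N p) (fun ω => (ω i).1)
        (fun ω => (fC (fun i' => (ω i').2),
          fun j : Fin i.val => (ω ⟨j.val, j.isLt.trans i.isLt⟩).2))
      = Hc (blk N p) (fun ω => (ω i).1)
          (fun ω => (fC (fun i' => (ω i').2),
            (fun j : Fin i.val => (ω ⟨j.val, j.isLt.trans i.isLt⟩).1),
            fun j : Fin i.val => (ω ⟨j.val, j.isLt.trans i.isLt⟩).2)) :=
        (part2 p hp.1 N fC i).symm
    _ = Hc (blk N p) (fun ω => (ω i).1)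
          (fun ω => ((fun j : Fin i.val => (ω ⟨j.val, j.isLt.trans i.isLt⟩).2),
            (fC (fun i' => (ω i').2),
              fun j : Fin i.val => (ω ⟨j.val, j.isLt.trans i.isLt⟩).1))) :=
        Hc_comp_inj_right (blk N p) (fun ω => (ω i).1)
          (fun ω => ((fun j : Fin i.val => (ω ⟨j.val, j.isLt.trans i.isLt⟩).2),
            (fC (fun i' => (ω i').2),
              fun j : Fin i.val => (ω ⟨j.val, j.isLt.trans i.isLt⟩).1)))
          (fun w : (Fin i.val → 𝒞) × (κ × (Fin i.val → 𝒜)) => (w.2.1, w.2.2, w.1))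
          (fun a b h => by
            obtain ⟨a1, a2, a3⟩ := a; obtain ⟨b1, b2, b3⟩ := b
            simp only [Prod.mk.injEq] at h ⊢
            tauto)
    _ ≤ Hc (blk N p) (fun ω => (ω i).1)
          (fun ω => (fC (fun i => (ω i).2),
            fun j : Fin i.val => (ω ⟨j.val, j.isLt.trans i.isLt⟩).1)) :=
        cond_reduce (blk N p) hnn (fun ω => (ω i).1)
          (fun ω => fun j : Fin i.val => (ω ⟨j.val, j.isLt.trans i.isLt⟩).2)
          (fun ω => (fC (fun i' => (ω i').2),
            fun j : Fin i.val => (ω ⟨j.val, j.isLt.trans i.isLt⟩).1))
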